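/- arXiv:2502.03495 — 3 statements merged into one kernel-verified Lean document; each statement's English description precedes it below -/
import Mathlib

section
/- If ⌊m/2⌋ ≤ k₂ < m, then the number of functions f : Fin n → ℕ with ∑ f i = m and f i ≤ k₂ for all i equals C(m+n-1, n-1) - n · C(m - k₂ + n - 2, n-1). -/
/-!
Stars and bars counts the distributions of `m` with no upper bound. A bad distribution has some
part `f i > k₂`; since `2 (k₂ + 1) > m`, that part is unique, and subtracting `k₂ + 1` from it
identifies the bad distributions with pairs of an index `i` and a distribution of `m - (k₂ + 1)`.
-/

section

variable {ι : Type*} [Fintype ι] [DecidableEq ι]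

theorem Nat.card_fun_sum_eq (m : ℕ) :
    Nat.card {f : ι → ℕ // ∑ i, f i = m} = (Fintype.card ι + m - 1).choose m := by
  rw [← Nat.card_congr (Sym.equivNatSumOfFintype ι m), Nat.card_eq_fintype_card,
    Sym.card_sym_eq_choose]

theorem Set.finite_fun_sum_eq (m : ℕ) : {f : ι → ℕ | ∑ i, f i = m}.Finite :=
  Set.finite_coe_iff.mp (Finite.of_equiv _ (Sym.equivNatSumOfFintype ι m))

theorem sum_add_pi_single (g : ι → ℕ) (i : ι) (c : ℕ) :
    ∑ j, (g + Pi.single i c : ι → ℕ) j = ∑ j, g j + c := by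
  simp [Finset.sum_add_distrib]

theorem eq_of_le_apply_of_le_apply {f : ι → ℕ} {c : ℕ} (hf : ∑ j, f j < 2 * c) {i i' : ι}
    (hi : c ≤ f i) (hi' : c ≤ f i') : i = i' := by
  by_contra hne
  have := Finset.sum_le_sum_of_subset (f := f) (Finset.subset_univ {i, i'})
  rw [Finset.sum_pair hne] at this
  omega

def addAt {m c : ℕ} (hcm : c ≤ m) (p : ι × {g : ι → ℕ // ∑ j, g j = m - c}) :
    {f : ι → ℕ // ∑ j, f j = m ∧ ∃ i, c ≤ f i} :=
  ⟨(p.2.1 + Pi.single p.1 c : ι → ℕ), by rw [sum_add_pi_single, p.2.2]; omega, p.1, by simp⟩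

theorem addAt_bijective {m c : ℕ} (hcm : c ≤ m) (hmc : m < 2 * c) :
    Function.Bijective (addAt (ι := ι) hcm) := by
  constructor
  · rintro ⟨i, g, hg⟩ ⟨i', g', hg'⟩ h
    have hf : (g + Pi.single i c : ι → ℕ) = g' + Pi.single i' c := congrArg Subtype.val h
    have hi : i = i' := by
      refine eq_of_le_apply_of_le_apply (f := (g + Pi.single i c : ι → ℕ)) (c := c) ?_ ?_ ?_
      · rw [sum_add_pi_single, hg]; omega
      · simp
      · rw [hf]; simp
    subst hi
    simpa using hf
  · rintro ⟨f, hf, i, hi⟩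
    have hle : (Pi.single i c : ι → ℕ) ≤ f := by
      intro j
      rcases eq_or_ne j i with rfl | hj
      · simpa using hi
      · simp [hj]
    have hsum : ∑ j, (f - Pi.single i c : ι → ℕ) j = m - c := by
      have := sum_add_pi_single (f - Pi.single i c) i c
      rw [tsub_add_cancel_of_le hle, hf] at this
      omega
    exact ⟨⟨i, f - Pi.single i c, hsum⟩, Subtype.ext (by exact tsub_add_cancel_of_le hle)⟩

theorem Nat.card_fun_sum_eq_exists_le {m c : ℕ} (hcm : c ≤ m) (hmc : m < 2 * c) :
    Nat.card {f : ι → ℕ // ∑ j, f j = m ∧ ∃ i, c ≤ f i}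
      = Fintype.card ι * (Fintype.card ι + (m - c) - 1).choose (m - c) := by
  rw [← Nat.card_congr (Equiv.ofBijective _ (addAt_bijective hcm hmc)), Nat.card_prod,
    Nat.card_eq_fintype_card, Nat.card_fun_sum_eq]

theorem ncard_fun_sum_eq_forall_le_add {m k : ℕ} (hkm : k < m) (hmk : m < 2 * (k + 1)) :
    {f : ι → ℕ | ∑ i, f i = m ∧ ∀ i, f i ≤ k}.ncard
      + Fintype.card ι * (Fintype.card ι + (m - (k + 1)) - 1).choose (m - (k + 1))
      = (Fintype.card ι + m - 1).choose m := by
  have hbad : {f : ι → ℕ | ∑ i, f i = m} \ {f | ∑ i, f i = m ∧ ∀ i, f i ≤ k}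
      = {f | ∑ i, f i = m ∧ ∃ i, k < f i} := by
    ext f
    simp only [Set.mem_sdiff, Set.mem_ofPred_eq, not_and, not_forall, not_le]
    tauto
  have hsub : {f : ι → ℕ | ∑ i, f i = m ∧ ∀ i, f i ≤ k} ⊆ {f | ∑ i, f i = m} := fun _ hf ↦ hf.1
  have := Set.ncard_sdiff_add_ncard_of_subset hsub (Set.finite_fun_sum_eq m)
  rw [hbad] at this
  -- `ncard` is `Nat.card` of the subtype, and `k < f i` unfolds to `k + 1 ≤ f i`.
  rw [← Nat.card_fun_sum_eq m, ← Nat.card_fun_sum_eq_exists_le (by omega) hmk, add_comm]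
  exact this

end

theorem Nat.choose_pred_add_eq {n a : ℕ} (hn : 1 ≤ n) :
    (n + a - 1).choose a = (a + n - 1).choose (n - 1) :=
  Nat.add_comm a n ▸ Nat.choose_symm_of_eq_add (by omega)

theorem stmt_4_general (m n k₂ : ℕ) (hn : 1 ≤ n)
    (h1 : m / 2 ≤ k₂) (h2 : k₂ < m) :
    ({f : Fin n → ℕ | (∑ i, f i = m) ∧ ∀ i, f i ≤ k₂}.ncard : ℤ)
      = (m + n - 1).choose (n - 1) - n * (m - k₂ + n - 2).choose (n - 1) := by
  have h := ncard_fun_sum_eq_forall_le_add (ι := Fin n) h2 (by omega)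
  rw [Fintype.card_fin, Nat.choose_pred_add_eq (a := m) hn,
    Nat.choose_pred_add_eq (a := m - (k₂ + 1)) hn,
    show m - (k₂ + 1) + n - 1 = m - k₂ + n - 2 by omega] at h
  omega

theorem stmt_4 (m n k₂ : ℕ) (hm : 1 ≤ m) (hn : 1 ≤ n)
    (h1 : m / 2 ≤ k₂) (h2 : k₂ < m) :
    ({f : Fin n → ℕ | (∑ i, f i = m) ∧ ∀ i, f i ≤ k₂}.ncard : ℤ)
      = (m + n - 1).choose (n - 1) - n * (m - k₂ + n - 2).choose (n - 1) :=
  stmt_4_general m n k₂ hn h1 h2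
end

section
/- For any natural numbers m, n ≥ 1 and κ, the number of functions f : Fin n → ℕ with ∑ f i = m and f i ≤ κ for all i equals ∑_{α=0}^{n} (-1)^α · C(n, α) · C(m - α(κ+1) + n - 1, n-1), where terms with m < α(κ+1) vanish (interpreted as zero). -/
open Finset

private lemma count_comps (n m : ℕ) (hn : 1 ≤ n) :
    (Finset.piAntidiag (Finset.univ : Finset (Fin n)) m).card = (m + n - 1).choose (n - 1) := by
  rw [← Finset.map_sym_eq_piAntidiag, Finset.card_map, Finset.sym_univ, Finset.card_univ,
    Sym.card_sym_eq_choose, Fintype.card_fin]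
  have h1 : m ≤ m + n - 1 := by omega
  have h2 : m + n - 1 - m = n - 1 := by omega
  rw [show n + m - 1 = m + n - 1 by omega, ← h2, Nat.choose_symm h1]

private lemma count_shift (n m c : ℕ) (hn : 1 ≤ n) (t : Finset (Fin n)) :
    ((Finset.piAntidiag (Finset.univ : Finset (Fin n)) m).filter
        (fun f => ∀ i ∈ t, c ≤ f i)).card
      = if t.card * c ≤ m then (m - t.card * c + n - 1).choose (n - 1) else 0 := by
  have hite : (∑ i : Fin n, (if i ∈ t then c else 0)) = t.card * c := by
    rw [Finset.sum_ite_mem, Finset.univ_inter, Finset.sum_const, smul_eq_mul, mul_comm]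
  have hsum : ∀ f : Fin n → ℕ, (∀ i ∈ t, c ≤ f i) → (∑ i, f i = m) → t.card * c ≤ m := by
    intro f hf hs
    calc t.card * c = ∑ _i ∈ t, c := by rw [Finset.sum_const, smul_eq_mul, mul_comm]
    _ ≤ ∑ i ∈ t, f i := Finset.sum_le_sum hf
    _ ≤ ∑ i, f i := Finset.sum_le_sum_of_subset (Finset.subset_univ t)
    _ = m := hs
  split_ifs with h
  · rw [← count_comps n (m - t.card * c) hn]
    refine Finset.card_bij' (fun f _ => fun i => f i - if i ∈ t then c else 0)
      (fun g _ => fun i => g i + if i ∈ t then c else 0) ?_ ?_ ?_ ?_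
    · intro f hf
      rw [Finset.mem_filter, Finset.mem_piAntidiag] at hf
      rw [Finset.mem_piAntidiag]
      refine ⟨?_, fun i _ => Finset.mem_univ i⟩
      have hb : ∀ i ∈ Finset.univ, (if i ∈ t then c else 0) ≤ f i := by
        intro i _
        split_ifs with hi
        · exact hf.2 i hi
        · exact Nat.zero_le _
      rw [Finset.sum_tsub_distrib _ hb, hf.1.1, hite]
    · intro g hg
      rw [Finset.mem_piAntidiag] at hg
      rw [Finset.mem_filter, Finset.mem_piAntidiag]
      refine ⟨⟨?_, fun i _ => Finset.mem_univ i⟩, ?_⟩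
      · rw [Finset.sum_add_distrib, hg.1, hite]; omega
      · intro i hi
        simp only [hi, if_true]
        exact Nat.le_add_left c (g i)
    · intro f hf
      rw [Finset.mem_filter] at hf
      funext i
      by_cases hi : i ∈ t
      · simp only [hi, if_true]
        have := hf.2 i hi
        omega
      · simp [hi]
    · intro g _
      funext i
      by_cases hi : i ∈ t <;> simp [hi]
  · rw [Finset.card_eq_zero, Finset.filter_eq_empty_iff]
    intro f hf hall
    rw [Finset.mem_piAntidiag] at hf
    exact h (hsum f hall hf.1)

theorem stmt_8 (m n κ : ℕ) (hn : 1 ≤ n) :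
    ({f : Fin n → ℕ | (∑ i, f i = m) ∧ ∀ i, f i ≤ κ}.ncard : ℤ)
      = ∑ α ∈ Finset.range (n + 1), (-1 : ℤ) ^ α * n.choose α *
          (if α * (κ + 1) ≤ m then ((m - α * (κ + 1) + n - 1).choose (n - 1) : ℤ) else 0) := by
  classical
  set D := Finset.piAntidiag (Finset.univ : Finset (Fin n)) m with hD
  have hset : {f : Fin n → ℕ | (∑ i, f i = m) ∧ ∀ i, f i ≤ κ}
      = ↑(D.filter fun f => ∀ i, f i ≤ κ) := by
    ext f
    simp [hD]
  rw [hset, Set.ncard_coe_finset]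
  set S : Fin n → Finset {f // f ∈ D} :=
    fun i => Finset.univ.filter fun f => κ + 1 ≤ (f : Fin n → ℕ) i with hS
  have hcard1 : (D.filter fun f => ∀ i, f i ≤ κ).card
      = ((Finset.univ : Finset (Fin n)).inf fun i => (S i)ᶜ).card := by
    refine Finset.card_bij' (fun f hf => (⟨f, (Finset.mem_filter.1 hf).1⟩ : {f // f ∈ D}))
      (fun g _ => (g : Fin n → ℕ)) ?_ ?_ ?_ ?_
    · intro f hf
      simp only [Finset.mem_inf, Finset.mem_compl, hS, Finset.mem_filter, Finset.mem_univ,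
        true_and, not_le]
      intro i _
      exact Nat.lt_succ_of_le ((Finset.mem_filter.1 hf).2 i)
    · intro g hg
      simp only [Finset.mem_inf, Finset.mem_compl, hS, Finset.mem_filter, Finset.mem_univ,
        true_and, not_le] at hg
      exact Finset.mem_filter.2 ⟨g.2, fun i => Nat.lt_succ_iff.1 (hg i trivial)⟩
    · intro f hf; rfl
    · intro g hg; rfl
  have hcard2 : ∀ t : Finset (Fin n), (t.inf S).card
      = (D.filter fun f => ∀ i ∈ t, κ + 1 ≤ f i).card := by
    intro t
    refine Finset.card_bij' (fun g _ => ((g : {f // f ∈ D}) : Fin n → ℕ))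
      (fun f hf => (⟨f, (Finset.mem_filter.1 hf).1⟩ : {f // f ∈ D})) ?_ ?_ ?_ ?_
    · intro g hg
      simp only [Finset.mem_inf, hS, Finset.mem_filter, Finset.mem_univ, true_and] at hg
      exact Finset.mem_filter.2 ⟨g.2, hg⟩
    · intro f hf
      simp only [Finset.mem_inf, hS, Finset.mem_filter, Finset.mem_univ, true_and]
      exact (Finset.mem_filter.1 hf).2
    · intro g _; rfl
    · intro f _; rfl
  rw [hcard1, Finset.inclusion_exclusion_card_inf_compl, Finset.sum_powerset,
    Finset.card_univ, Fintype.card_fin]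
  refine Finset.sum_congr rfl fun j hj => ?_
  have hterm : ∀ t ∈ Finset.powersetCard j (Finset.univ : Finset (Fin n)),
      ((-1 : ℤ) ^ t.card * (t.inf S).card : ℤ)
        = (-1 : ℤ) ^ j *
          (if j * (κ + 1) ≤ m then ((m - j * (κ + 1) + n - 1).choose (n - 1) : ℤ) else 0) := by
    intro t ht
    have hcardt : t.card = j := (Finset.mem_powersetCard.1 ht).2
    rw [hcard2 t, hD, count_shift n m (κ + 1) hn t, hcardt]
    split_ifs with h <;> simp
  rw [Finset.sum_congr rfl hterm, Finset.sum_const, Finset.card_powersetCard,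
    Finset.card_univ, Fintype.card_fin, nsmul_eq_mul]
  ring
end

section
/- If 1 ≤ k₁, n·k₁ ≤ m, and ⌊(m - n·k₁)/2⌋ ≤ k₂ - k₁ < m - n·k₁, then the number of functions f : Fin n → ℕ with ∑ f i = m and k₁ ≤ f i ≤ k₂ for all i equals C(m - n·k₁ + n - 1, n-1) - n · C(m - n·k₁ - (k₂ - k₁) + n - 2, n-1). -/
/-!
Subtracting `k₁` from every coordinate turns the functions being counted into the weak
compositions of `M = m - n * k₁` into `n` parts, each at most `t = k₂ - k₁`. Stars and bars
counts all weak compositions of `M`. Since `M ≤ 2 * t + 1`, at most one part of a weak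
composition can exceed `t`, so the bad ones split disjointly by the offending coordinate, and
subtracting `t + 1` from it leaves an arbitrary weak composition of `M - (t + 1)`.
-/

open Finset Finset.Nat

namespace Finset.Nat

theorem card_antidiagonalTuple (k n : ℕ) :
    #(antidiagonalTuple k n) = (k + n - 1).choose n := by
  rw [card_eq_of_equiv_fintype ((Equiv.subtypeEquivRight fun _ => mem_antidiagonalTuple).trans
    (Sym.equivNatSumOfFintype (Fin k) n).symm), Sym.card_sym_eq_choose, Fintype.card_fin]

lemma card_filter_le_apply_antidiagonalTuple {k n c : ℕ} (i : Fin k) (hc : c ≤ n) :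
    #{g ∈ antidiagonalTuple k n | c ≤ g i} = #(antidiagonalTuple k (n - c)) := by
  have cancel (g : Fin k → ℕ) (hg : c ≤ g i) : g - Pi.single i c + Pi.single i c = g := by
    funext j
    by_cases hj : j = i
    · subst hj; simp [hg]
    · simp [hj]
  refine card_nbij' (· - Pi.single i c) (· + Pi.single i c) ?_ ?_ ?_ ?_
  · intro g hg
    simp only [coe_filter, Set.mem_ofPred_eq, mem_antidiagonalTuple, mem_coe] at hg ⊢
    have := congrArg (fun g : Fin k → ℕ => ∑ j, g j) (cancel g hg.2)
    simp only [Pi.add_apply, sum_add_distrib, Fintype.sum_pi_single'] at this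
    omega
  · intro h hh
    simp only [coe_filter, Set.mem_ofPred_eq, mem_antidiagonalTuple, mem_coe] at hh ⊢
    simp [sum_add_distrib, hh, hc]
  · intro g hg
    exact cancel g (mem_filter.1 hg).2
  · intro h _
    exact add_tsub_cancel_right h _

lemma card_filter_exists_le_apply_antidiagonalTuple {k n c : ℕ} (hc : c ≤ n) (hn : n < 2 * c) :
    #{g ∈ antidiagonalTuple k n | ∃ i, c ≤ g i} = k * #(antidiagonalTuple k (n - c)) := by
  have hunion : {g ∈ antidiagonalTuple k n | ∃ i, c ≤ g i}
      = univ.biUnion fun i => {g ∈ antidiagonalTuple k n | c ≤ g i} := by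
    ext g; simp
  have hdisj : ((univ : Finset (Fin k)) : Set (Fin k)).PairwiseDisjoint
      fun i => {g ∈ antidiagonalTuple k n | c ≤ g i} := by
    intro i _ j _ hij
    refine disjoint_left.2 fun g hgi hgj => ?_
    simp only [mem_filter, mem_antidiagonalTuple] at hgi hgj
    have := sum_le_sum_of_subset (f := g) (subset_univ {i, j})
    rw [sum_pair hij] at this
    omega
  rw [hunion, card_biUnion hdisj]
  simp [card_filter_le_apply_antidiagonalTuple _ hc]

lemma card_filter_forall_apply_le_antidiagonalTuple_add {k n t : ℕ} (ht : t < n)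
    (hn : n ≤ 2 * t + 1) :
    #{g ∈ antidiagonalTuple k n | ∀ i, g i ≤ t} + k * #(antidiagonalTuple k (n - (t + 1)))
      = #(antidiagonalTuple k n) := by
  have hcompl : {g ∈ antidiagonalTuple k n | ∃ i, t + 1 ≤ g i}
      = {g ∈ antidiagonalTuple k n | ¬ ∀ i, g i ≤ t} := by
    ext g; simp
  rw [← card_filter_exists_le_apply_antidiagonalTuple (by omega) (by omega), hcompl,
    card_filter_add_card_filter_not]

lemma ncard_sum_eq_and_forall_mem_Icc {n m a b : ℕ} (hab : a ≤ b) (hm : n * a ≤ m) :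
    {f : Fin n → ℕ | (∑ i, f i = m) ∧ ∀ i, a ≤ f i ∧ f i ≤ b}.ncard
      = #{g ∈ antidiagonalTuple n (m - n * a) | ∀ i, g i ≤ b - a} := by
  have sum_shift (g : Fin n → ℕ) : ∑ i, (g + fun _ => a : Fin n → ℕ) i = ∑ i, g i + n * a := by
    simp [sum_add_distrib]
  symm
  rw [← Set.ncard_coe_finset, ← Set.ncard_image_of_injective _ (add_left_injective fun _ => a)]
  congr 1
  ext f
  simp only [coe_filter, mem_antidiagonalTuple, Set.mem_image, Set.mem_ofPred_eq]
  constructor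
  · rintro ⟨g, ⟨hsum, hg⟩, rfl⟩
    refine ⟨by rw [sum_shift]; omega, fun i => ?_⟩
    have := hg i
    simp only [Pi.add_apply]
    omega
  · rintro ⟨hsum, hf⟩
    have hsub : (fun i => f i - a) + (fun _ => a) = f :=
      funext fun i => Nat.sub_add_cancel (hf i).1
    have := sum_shift fun i => f i - a
    rw [hsub] at this
    refine ⟨_, ⟨by omega, fun i => ?_⟩, hsub⟩
    have := hf i
    omega

end Finset.Nat

theorem stmt_16_general (m n k₁ k₂ : ℕ) (hn : 2 ≤ n) (hm : n * k₁ ≤ m)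
    (hk : k₁ ≤ k₂) (h1 : (m - n * k₁) / 2 ≤ k₂ - k₁) (h2 : k₂ - k₁ < m - n * k₁) :
    ({f : Fin n → ℕ | (∑ i, f i = m) ∧ ∀ i, k₁ ≤ f i ∧ f i ≤ k₂}.ncard : ℤ)
      = (m - n * k₁ + n - 1).choose (n - 1)
        - n * (m - n * k₁ - (k₂ - k₁) + n - 2).choose (n - 1) := by
  have hcount := card_filter_forall_apply_le_antidiagonalTuple_add (k := n) h2 (by omega)
  rw [card_antidiagonalTuple, card_antidiagonalTuple,
    Nat.choose_symm_of_eq_add (by omega : n + (m - n * k₁ - (k₂ - k₁ + 1)) - 1 = _ + (n - 1)),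
    Nat.choose_symm_of_eq_add (by omega : n + (m - n * k₁) - 1 = _ + (n - 1))] at hcount
  have e1 : m - n * k₁ - (k₂ - k₁) + n - 2 = n + (m - n * k₁ - (k₂ - k₁ + 1)) - 1 := by omega
  have e2 : m - n * k₁ + n - 1 = n + (m - n * k₁) - 1 := by omega
  rw [ncard_sum_eq_and_forall_mem_Icc hk hm, e1, e2, ← hcount]
  push_cast
  ring

theorem stmt_16 (m n k₁ k₂ : ℕ) (hn : 2 ≤ n) (hk1 : 1 ≤ k₁) (hm : n * k₁ ≤ m)
    (hk : k₁ ≤ k₂) (h1 : (m - n * k₁) / 2 ≤ k₂ - k₁) (h2 : k₂ - k₁ < m - n * k₁) :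
    ({f : Fin n → ℕ | (∑ i, f i = m) ∧ ∀ i, k₁ ≤ f i ∧ f i ≤ k₂}.ncard : ℤ)
      = (m - n * k₁ + n - 1).choose (n - 1)
        - n * (m - n * k₁ - (k₂ - k₁) + n - 2).choose (n - 1) :=
  stmt_16_general m n k₁ k₂ hn hm hk h1 h2
end
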